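/- Let n ≥ 1, 0 < β ≤ 1, and 0 < α₁ ≤ α₂. Let Φ: ℝⁿ → ℝⁿ be continuously differentiable and let M be a continuous map from ℝⁿ to the n×n real symmetric matrices with α₁‖v‖² ≤ vᵀ M(x) v ≤ α₂‖v‖² for all x, v, and DΦ(x)ᵀ M(Φ(x)) DΦ(x) ⪯ (1−β) M(x) for all x. Let (x_k), (y_k) be sequences in ℝⁿ with x_{k+1} = Φ(x_k) + w_k and y_{k+1} = Φ(y_k), where w_k ∈ ℝⁿ and ‖w_k‖ → 0 as k → ∞. Then ‖x_k − y_k‖ → 0 as k → ∞. -/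

import Mathlib

open Matrix

/-- The Euclidean norm of a vector in `ℝⁿ`. -/
noncomputable def euclNorm {n : ℕ} (v : Fin n → ℝ) : ℝ :=
  Real.sqrt (v ⬝ᵥ v)

namespace OffsetFreeAux

variable {n : ℕ} {M : (Fin n → ℝ) → Matrix (Fin n) (Fin n) ℝ} {β α₁ α₂ : ℝ}
  {Φ : (Fin n → ℝ) → Fin n → ℝ} {J : (Fin n → ℝ) → Matrix (Fin n) (Fin n) ℝ}

lemma euclNorm_nonneg (v : Fin n → ℝ) : 0 ≤ euclNorm v := Real.sqrt_nonneg _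

lemma euclNorm_smul (c : ℝ) (v : Fin n → ℝ) : euclNorm (c • v) = |c| * euclNorm v := by
  have h : (c • v) ⬝ᵥ (c • v) = c ^ 2 * (v ⬝ᵥ v) := by
    simp [smul_dotProduct, dotProduct_smul, mul_assoc, sq]
  rw [euclNorm, h, Real.sqrt_mul (sq_nonneg c), Real.sqrt_sq_eq_abs, euclNorm]

lemma euclNorm_continuous : Continuous fun v : Fin n → ℝ => euclNorm v := by
  apply Real.continuous_sqrt.comp
  simp only [dotProduct]
  exact continuous_finset_sum _ fun i _ => (continuous_apply i).mul (continuous_apply i)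

lemma euclNorm_eq_norm (v : Fin n → ℝ) :
    euclNorm v = ‖(EuclideanSpace.equiv (Fin n) ℝ).symm v‖ := by
  simp [euclNorm, dotProduct, EuclideanSpace.norm_eq, Real.norm_eq_abs, sq_abs, sq,
    EuclideanSpace.equiv]

noncomputable def mnorm (M : (Fin n → ℝ) → Matrix (Fin n) (Fin n) ℝ) (x v : Fin n → ℝ) : ℝ :=
  Real.sqrt (v ⬝ᵥ (M x).mulVec v)

lemma mnorm_nonneg (M : (Fin n → ℝ) → Matrix (Fin n) (Fin n) ℝ) (x v : Fin n → ℝ) :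
    0 ≤ mnorm M x v := Real.sqrt_nonneg _

lemma mnorm_smul (M : (Fin n → ℝ) → Matrix (Fin n) (Fin n) ℝ) (x : Fin n → ℝ) (c : ℝ)
    (v : Fin n → ℝ) : mnorm M x (c • v) = |c| * mnorm M x v := by
  have h : (c • v) ⬝ᵥ (M x).mulVec (c • v) = c ^ 2 * (v ⬝ᵥ (M x).mulVec v) := by
    simp [smul_dotProduct, Matrix.mulVec_smul, dotProduct_smul, mul_assoc, sq]
  rw [mnorm, h, Real.sqrt_mul (sq_nonneg c), Real.sqrt_sq_eq_abs, mnorm]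

lemma mnorm_le (hα₂ : 0 ≤ α₂)
    (hMub : ∀ x (v : Fin n → ℝ), v ⬝ᵥ (M x).mulVec v ≤ α₂ * (euclNorm v) ^ 2)
    (x v : Fin n → ℝ) : mnorm M x v ≤ Real.sqrt α₂ * euclNorm v := by
  have h := Real.sqrt_le_sqrt (hMub x v)
  rwa [Real.sqrt_mul hα₂, euclNorm, Real.sqrt_sq (Real.sqrt_nonneg _)] at h

lemma mnorm_ge (hα₁ : 0 ≤ α₁)
    (hMlb : ∀ x (v : Fin n → ℝ), α₁ * (euclNorm v) ^ 2 ≤ v ⬝ᵥ (M x).mulVec v)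
    (x v : Fin n → ℝ) : Real.sqrt α₁ * euclNorm v ≤ mnorm M x v := by
  have h := Real.sqrt_le_sqrt (hMlb x v)
  rwa [Real.sqrt_mul hα₁, euclNorm, Real.sqrt_sq (Real.sqrt_nonneg _)] at h

lemma quad_cont (hM : Continuous M) {γ δ : ℝ → Fin n → ℝ}
    (hγ : Continuous γ) (hδ : Continuous δ) :
    Continuous fun t => δ t ⬝ᵥ (M (γ t)).mulVec (δ t) := by
  simp only [dotProduct, Matrix.mulVec, dotProduct]
  apply continuous_finset_sum; intro i _
  apply ((continuous_apply i).comp hδ).mul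
  apply continuous_finset_sum; intro j _
  exact (((continuous_apply j).comp ((continuous_apply i).comp (hM.comp hγ)))).mul
    ((continuous_apply j).comp hδ)

lemma mnorm_cont (hM : Continuous M) {γ δ : ℝ → Fin n → ℝ}
    (hγ : Continuous γ) (hδ : Continuous δ) :
    Continuous fun t => mnorm M (γ t) (δ t) :=
  Real.continuous_sqrt.comp (quad_cont hM hγ hδ)

noncomputable def mlen (M : (Fin n → ℝ) → Matrix (Fin n) (Fin n) ℝ)
    (γ γ' : ℝ → Fin n → ℝ) : ℝ :=
  ∫ t in (0:ℝ)..1, mnorm M (γ t) (γ' t)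

def pathSet (M : (Fin n → ℝ) → Matrix (Fin n) (Fin n) ℝ) (a b : Fin n → ℝ) : Set ℝ :=
  {L | ∃ γ γ' : ℝ → Fin n → ℝ, (∀ t, HasDerivAt γ (γ' t) t) ∧ Continuous γ' ∧
    γ 0 = a ∧ γ 1 = b ∧ mlen M γ γ' = L}

noncomputable def pdist (M : (Fin n → ℝ) → Matrix (Fin n) (Fin n) ℝ) (a b : Fin n → ℝ) : ℝ :=
  sInf (pathSet M a b)

lemma pathSet_nonneg {a b : Fin n → ℝ} {L : ℝ} (hL : L ∈ pathSet M a b) : 0 ≤ L := by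
  obtain ⟨γ, γ', _, _, _, _, rfl⟩ := hL
  exact intervalIntegral.integral_nonneg zero_le_one fun t _ => mnorm_nonneg M _ _

lemma pathSet_bddBelow (a b : Fin n → ℝ) : BddBelow (pathSet M a b) :=
  ⟨0, fun _ hL => pathSet_nonneg hL⟩

lemma segment_mem (a b : Fin n → ℝ) : mlen M (fun t => a + t • (b - a)) (fun _ => b - a) ∈ pathSet M a b := by
  refine ⟨_, _, fun t => ?_, continuous_const, by simp, by simp, rfl⟩
  simpa using ((hasDerivAt_id t).smul_const (b - a)).const_add a

lemma pathSet_nonempty (a b : Fin n → ℝ) : (pathSet M a b).Nonempty := ⟨_, segment_mem a b⟩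

lemma pdist_le (hα₂ : 0 ≤ α₂) (hM : Continuous M)
    (hMub : ∀ x (v : Fin n → ℝ), v ⬝ᵥ (M x).mulVec v ≤ α₂ * (euclNorm v) ^ 2)
    (a b : Fin n → ℝ) : pdist M a b ≤ Real.sqrt α₂ * euclNorm (b - a) := by
  refine le_trans (csInf_le (pathSet_bddBelow a b) (segment_mem a b)) ?_
  have hcont : Continuous fun t : ℝ => mnorm M (a + t • (b - a)) (b - a) :=
    mnorm_cont hM (by continuity) continuous_const
  calc mlen M (fun t => a + t • (b - a)) (fun _ => b - a)
      ≤ ∫ _ in (0:ℝ)..1, Real.sqrt α₂ * euclNorm (b - a) := by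
        apply intervalIntegral.integral_mono_on zero_le_one
          (hcont.intervalIntegrable _ _) (intervalIntegrable_const)
        intro t _; exact mnorm_le hα₂ hMub _ _
    _ = Real.sqrt α₂ * euclNorm (b - a) := by simp

lemma pdist_ge (hα₁ : 0 ≤ α₁) (hM : Continuous M)
    (hMlb : ∀ x (v : Fin n → ℝ), α₁ * (euclNorm v) ^ 2 ≤ v ⬝ᵥ (M x).mulVec v)
    (a b : Fin n → ℝ) : Real.sqrt α₁ * euclNorm (b - a) ≤ pdist M a b := by
  refine le_csInf (pathSet_nonempty a b) ?_
  rintro L ⟨γ, γ', hd, hc, h0, h1, rfl⟩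
  set e := (EuclideanSpace.equiv (Fin n) ℝ).symm with he
  have hγc : Continuous γ := by
    rw [continuous_iff_continuousAt]; exact fun t => (hd t).continuousAt
  have hd2 : ∀ t, HasDerivAt (fun s => e (γ s)) (e (γ' t)) t := fun t =>
    (e.toContinuousLinearMap.hasFDerivAt.comp_hasDerivAt t (hd t))
  have hintc : Continuous fun t => e (γ' t) := e.continuous.comp hc
  have hftc : (∫ t in (0:ℝ)..1, e (γ' t)) = e (γ 1) - e (γ 0) :=
    intervalIntegral.integral_eq_sub_of_hasDerivAt (fun t _ => hd2 t)
      (hintc.intervalIntegrable _ _)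
  have hnorm : euclNorm (b - a) ≤ ∫ t in (0:ℝ)..1, euclNorm (γ' t) := by
    have h1 : euclNorm (b - a) = ‖e (γ 1) - e (γ 0)‖ := by
      rw [euclNorm_eq_norm, h0, h1, map_sub]
    rw [h1, ← hftc]
    refine le_trans (intervalIntegral.norm_integral_le_integral_norm zero_le_one) ?_
    refine le_of_eq (intervalIntegral.integral_congr fun t _ => ?_)
    rw [← euclNorm_eq_norm]
  calc Real.sqrt α₁ * euclNorm (b - a)
      ≤ Real.sqrt α₁ * ∫ t in (0:ℝ)..1, euclNorm (γ' t) := by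
        exact mul_le_mul_of_nonneg_left hnorm (Real.sqrt_nonneg _)
    _ = ∫ t in (0:ℝ)..1, Real.sqrt α₁ * euclNorm (γ' t) := by
        rw [← intervalIntegral.integral_const_mul]
    _ ≤ mlen M γ γ' := by
        apply intervalIntegral.integral_mono_on zero_le_one
          ((continuous_const.mul ((euclNorm_continuous).comp hc)).intervalIntegrable _ _)
          ((mnorm_cont hM hγc hc).intervalIntegrable _ _)
        intro t _; exact mnorm_ge hα₁ hMlb _ _

noncomputable def σt : ℝ → ℝ := Real.smoothTransition

noncomputable def σt' : ℝ → ℝ := deriv Real.smoothTransition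

lemma σt_hasDeriv (t : ℝ) : HasDerivAt σt (σt' t) t :=
  ((Real.smoothTransition.contDiff (n := 1)).differentiable one_ne_zero t).hasDerivAt

lemma σt'_cont : Continuous σt' :=
  (Real.smoothTransition.contDiff (n := 1)).continuous_deriv le_rfl

lemma expNegInvGlue_mono : Monotone expNegInvGlue := by
  intro s t hst
  rcases le_or_gt t 0 with h | h
  · rw [expNegInvGlue.zero_of_nonpos h, expNegInvGlue.zero_of_nonpos (hst.trans h)]
  rcases le_or_gt s 0 with h2 | h2
  · rw [expNegInvGlue.zero_of_nonpos h2]; exact expNegInvGlue.nonneg t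
  · rw [expNegInvGlue, expNegInvGlue, if_neg (not_le.2 h2), if_neg (not_le.2 h)]
    apply Real.exp_le_exp.2
    simp only [neg_le_neg_iff]
    exact inv_anti₀ h2 hst

lemma σt_mono : Monotone σt := by
  intro s t hst
  simp only [σt, Real.smoothTransition]
  rw [div_le_div_iff₀ (Real.smoothTransition.pos_denom s) (Real.smoothTransition.pos_denom t)]
  have h1 : expNegInvGlue s ≤ expNegInvGlue t := expNegInvGlue_mono hst
  have h2 : expNegInvGlue (1 - t) ≤ expNegInvGlue (1 - s) :=
    expNegInvGlue_mono (by linarith)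
  nlinarith [expNegInvGlue.nonneg s, expNegInvGlue.nonneg t,
    expNegInvGlue.nonneg (1 - s), expNegInvGlue.nonneg (1 - t)]

lemma σt'_nonneg (t : ℝ) : 0 ≤ σt' t := by
  have h := σt_hasDeriv t
  rw [hasDerivAt_iff_tendsto_slope] at h
  have hmono : nhdsWithin t (Set.Ioi t) ≤ nhdsWithin t {t}ᶜ :=
    nhdsWithin_mono t fun y (hy : y ∈ Set.Ioi t) =>
      Set.mem_compl_singleton_iff.2 (ne_of_gt hy)
  have : ∀ᶠ y in nhdsWithin t (Set.Ioi t), 0 ≤ slope σt t y := by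
    filter_upwards [self_mem_nhdsWithin] with y hy
    rw [slope_def_field]
    have h1 : σt t ≤ σt y := σt_mono (le_of_lt (Set.mem_Ioi.1 hy))
    have h2 : t < y := Set.mem_Ioi.1 hy
    exact div_nonneg (by linarith) (by linarith)
  exact ge_of_tendsto (h.mono_left hmono) this

lemma σt'_of_nonpos {t : ℝ} (ht : t ≤ 0) : σt' t = 0 := by
  have hmin : IsLocalMin σt t := by
    apply Filter.Eventually.of_forall
    intro y
    simp only [σt]
    rw [Real.smoothTransition.zero_of_nonpos ht]
    exact Real.smoothTransition.nonneg y
  exact hmin.deriv_eq_zero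

lemma σt'_of_one_le {t : ℝ} (ht : 1 ≤ t) : σt' t = 0 := by
  have hmax : IsLocalMax σt t := by
    apply Filter.Eventually.of_forall
    intro y
    simp only [σt]
    rw [Real.smoothTransition.one_of_one_le ht]
    exact Real.smoothTransition.le_one y
  exact hmax.deriv_eq_zero

lemma contr_mnorm (hβ : 0 ≤ 1 - β)
    (hcontr : ∀ x, ((1 - β) • M x - (J x)ᵀ * M (Φ x) * J x).PosSemidef)
    (x v : Fin n → ℝ) :
    mnorm M (Φ x) ((J x).mulVec v) ≤ Real.sqrt (1 - β) * mnorm M x v := by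
  have h := (hcontr x).dotProduct_mulVec_nonneg v
  rw [star_trivial] at h
  have hrw : v ⬝ᵥ ((J x)ᵀ * M (Φ x) * J x) *ᵥ v
      = ((J x).mulVec v) ⬝ᵥ (M (Φ x)).mulVec ((J x).mulVec v) := by
    rw [← Matrix.mulVec_mulVec, ← Matrix.mulVec_mulVec, Matrix.dotProduct_mulVec,
      Matrix.vecMul_transpose]
  have hq : ((J x).mulVec v) ⬝ᵥ (M (Φ x)).mulVec ((J x).mulVec v)
      ≤ (1 - β) * (v ⬝ᵥ (M x).mulVec v) := by
    rw [Matrix.sub_mulVec, dotProduct_sub, Matrix.smul_mulVec, dotProduct_smul,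
      smul_eq_mul, sub_nonneg] at h
    exact le_of_eq hrw.symm |>.trans h
  have hs := Real.sqrt_le_sqrt hq
  rw [Real.sqrt_mul hβ] at hs
  simp only [mnorm]
  exact hs

lemma J_cont (hΦ : ContDiff ℝ 1 Φ)
    (hJ : ∀ x, HasFDerivAt Φ (J x).mulVecLin.toContinuousLinearMap x) :
    Continuous J := by
  have hf : Continuous (fderiv ℝ Φ) := hΦ.continuous_fderiv one_ne_zero
  have hfe : ∀ x, fderiv ℝ Φ x = (J x).mulVecLin.toContinuousLinearMap :=
    fun x => (hJ x).fderiv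
  have hcomp : ∀ (i j : Fin n), Continuous fun x => J x i j := by
    intro i j
    have : (fun x => J x i j) = fun x => fderiv ℝ Φ x (Pi.single j 1) i := by
      funext x
      rw [hfe x]
      simp [Matrix.mulVecLin, Matrix.mulVec_single]
    rw [this]
    exact (continuous_apply i).comp (hf.clm_apply continuous_const)
  exact continuous_matrix hcomp

lemma mulVec_cont {A : ℝ → Matrix (Fin n) (Fin n) ℝ} {v : ℝ → Fin n → ℝ}
    (hA : Continuous A) (hv : Continuous v) : Continuous fun t => (A t).mulVec (v t) := by
  apply continuous_pi; intro i
  simp only [Matrix.mulVec, dotProduct]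
  apply continuous_finset_sum; intro j _
  exact (((continuous_apply j).comp ((continuous_apply i).comp hA))).mul
    ((continuous_apply j).comp hv)

lemma hds (c d t : ℝ) : HasDerivAt (fun t : ℝ => σt (c * t + d)) (c * σt' (c * t + d)) t := by
  have h1 : HasDerivAt (fun t : ℝ => c * t + d) c t := by
    simpa using ((hasDerivAt_id t).const_mul c).add_const d
  rw [show c * σt' (c * t + d) = σt' (c * t + d) * c from mul_comm _ _]
  exact (σt_hasDeriv (c * t + d)).comp t h1

lemma pdist_step_path (hβ0 : 0 < β) (hβ1 : β ≤ 1) (hα₂ : 0 ≤ α₂)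
    (hΦ : ContDiff ℝ 1 Φ)
    (hJ : ∀ x, HasFDerivAt Φ (J x).mulVecLin.toContinuousLinearMap x)
    (hM : Continuous M)
    (hMub : ∀ x (v : Fin n → ℝ), v ⬝ᵥ (M x).mulVec v ≤ α₂ * (euclNorm v) ^ 2)
    (hcontr : ∀ x, ((1 - β) • M x - (J x)ᵀ * M (Φ x) * J x).PosSemidef)
    (a b w : Fin n → ℝ) {L : ℝ} (hL : L ∈ pathSet M a b) :
    pdist M (Φ a + w) (Φ b) ≤ Real.sqrt (1 - β) * L + Real.sqrt α₂ * euclNorm w := by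
  obtain ⟨γ, γ', hd, hc, h0, h1, rfl⟩ := hL
  have hβ : (0:ℝ) ≤ 1 - β := by linarith
  have hγc : Continuous γ := continuous_iff_continuousAt.2 fun t => (hd t).continuousAt
  set η : ℝ → Fin n → ℝ := fun t => Φ (γ (σt (2*t - 1))) + (1 - σt (2*t)) • w with hη
  set η' : ℝ → Fin n → ℝ := fun t =>
    (2 * σt' (2*t - 1)) • ((J (γ (σt (2*t - 1)))).mulVec (γ' (σt (2*t - 1))))
      + (-(2 * σt' (2*t))) • w with hη'
  have hσ1c : Continuous fun t : ℝ => σt (2*t - 1) :=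
    Real.smoothTransition.continuous.comp (by continuity)
  have hσ2c : Continuous fun t : ℝ => σt (2*t) :=
    Real.smoothTransition.continuous.comp (by continuity)
  have hσ1'c : Continuous fun t : ℝ => σt' (2*t - 1) := σt'_cont.comp (by continuity)
  have hσ2'c : Continuous fun t : ℝ => σt' (2*t) := σt'_cont.comp (by continuity)
  have hd1 : ∀ t : ℝ, HasDerivAt (fun t : ℝ => σt (2*t - 1)) (2 * σt' (2*t - 1)) t := by
    intro t
    have := hds 2 (-1) t
    simpa [sub_eq_add_neg] using this
  have hd2 : ∀ t : ℝ, HasDerivAt (fun t : ℝ => σt (2*t)) (2 * σt' (2*t)) t := by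
    intro t
    have := hds 2 0 t
    simpa using this
  -- derivative of η
  have hdη : ∀ t, HasDerivAt η (η' t) t := by
    intro t
    have hA : HasDerivAt (fun t => γ (σt (2*t - 1)))
        ((2 * σt' (2*t - 1)) • γ' (σt (2*t - 1))) t :=
      (hd (σt (2*t - 1))).scomp t (hd1 t)
    have hB : HasDerivAt (fun t => Φ (γ (σt (2*t - 1))))
        ((2 * σt' (2*t - 1)) • ((J (γ (σt (2*t - 1)))).mulVec (γ' (σt (2*t - 1))))) t := by
      have := (hJ (γ (σt (2*t - 1)))).comp_hasDerivAt t hA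
      rw [show ((2 * σt' (2*t - 1)) • ((J (γ (σt (2*t - 1)))).mulVec (γ' (σt (2*t - 1))))) = (J (γ (σt (2*t - 1)))).mulVecLin.toContinuousLinearMap ((2 * σt' (2*t - 1)) • γ' (σt (2*t - 1))) by simp [Matrix.mulVec_smul]]
      exact this
    have hC : HasDerivAt (fun t : ℝ => (1 - σt (2*t)) • w) ((-(2 * σt' (2*t))) • w) t := by
      have h1 : HasDerivAt (fun t : ℝ => 1 - σt (2*t)) (-(2 * σt' (2*t))) t :=
        (hd2 t).const_sub 1
      exact h1.smul_const w
    exact hB.add hC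
  have hη'c : Continuous η' := by
    refine Continuous.add (Continuous.smul (continuous_const.mul hσ1'c) ?_)
      (Continuous.smul (continuous_const.mul hσ2'c).neg continuous_const)
    exact mulVec_cont ((J_cont hΦ hJ).comp (hγc.comp hσ1c)) (hc.comp hσ1c)
  have hηc : Continuous η :=
    ((hΦ.continuous).comp (hγc.comp hσ1c)).add
      ((continuous_const.sub hσ2c).smul continuous_const)
  have hIc : Continuous fun t => mnorm M (η t) (η' t) := mnorm_cont hM hηc hη'c
  -- endpoints
  have hη0 : η 0 = Φ a + w := by
    simp only [hη]
    have e1 : σt (2*(0:ℝ) - 1) = 0 := Real.smoothTransition.zero_of_nonpos (by norm_num)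
    have e2 : σt (2*(0:ℝ)) = 0 := Real.smoothTransition.zero_of_nonpos (by norm_num)
    rw [e1, e2, h0]; simp
  have hη1 : η 1 = Φ b := by
    simp only [hη]
    have e1 : σt (2*(1:ℝ) - 1) = 1 := Real.smoothTransition.one_of_one_le (by norm_num)
    have e2 : σt (2*(1:ℝ)) = 1 := Real.smoothTransition.one_of_one_le (by norm_num)
    rw [e1, e2, h1]; simp
  -- split the integral
  have hsplit : mlen M η η' = (∫ t in (0:ℝ)..(1/2), mnorm M (η t) (η' t))
      + ∫ t in (1/2:ℝ)..1, mnorm M (η t) (η' t) :=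
    (intervalIntegral.integral_add_adjacent_intervals
      (hIc.intervalIntegrable _ _) (hIc.intervalIntegrable _ _)).symm
  -- first piece
  have hfirst : (∫ t in (0:ℝ)..(1/2), mnorm M (η t) (η' t))
      ≤ Real.sqrt α₂ * euclNorm w := by
    have hb : ∀ t ∈ Set.Icc (0:ℝ) (1/2),
        mnorm M (η t) (η' t) ≤ (2 * σt' (2*t)) * (Real.sqrt α₂ * euclNorm w) := by
      intro t ht
      have hz : σt' (2*t - 1) = 0 := σt'_of_nonpos (by linarith [ht.2])
      have he : η' t = (-(2 * σt' (2*t))) • w := by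
        simp [hη', hz]
      rw [he, mnorm_smul, abs_neg, abs_of_nonneg (mul_nonneg (by norm_num) (σt'_nonneg _))]
      exact mul_le_mul_of_nonneg_left (mnorm_le hα₂ hMub _ _)
        (mul_nonneg (by norm_num) (σt'_nonneg _))
    calc (∫ t in (0:ℝ)..(1/2), mnorm M (η t) (η' t))
        ≤ ∫ t in (0:ℝ)..(1/2), (2 * σt' (2*t)) * (Real.sqrt α₂ * euclNorm w) := by
          apply intervalIntegral.integral_mono_on (by norm_num)
            (hIc.intervalIntegrable _ _)
            (((continuous_const.mul hσ2'c).mul continuous_const).intervalIntegrable _ _) hb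
      _ = (σt (2*(1/2:ℝ)) - σt (2*0)) * (Real.sqrt α₂ * euclNorm w) := by
          rw [intervalIntegral.integral_mul_const,
            intervalIntegral.integral_eq_sub_of_hasDerivAt (fun t _ => hd2 t)
              ((continuous_const.mul hσ2'c).intervalIntegrable _ _)]
      _ = Real.sqrt α₂ * euclNorm w := by
          have e1 : σt (2*(1/2:ℝ)) = 1 := Real.smoothTransition.one_of_one_le (by norm_num)
          have e2 : σt (2*(0:ℝ)) = 0 := Real.smoothTransition.zero_of_nonpos (by norm_num)
          rw [e1, e2]; ring
  -- second piece
  have hsecond : (∫ t in (1/2:ℝ)..1, mnorm M (η t) (η' t))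
      ≤ Real.sqrt (1 - β) * mlen M γ γ' := by
    set g : ℝ → ℝ := fun s => Real.sqrt (1 - β) * mnorm M (γ s) (γ' s) with hg
    have hgc : Continuous g := continuous_const.mul (mnorm_cont hM hγc hc)
    have hb : ∀ t ∈ Set.Icc (1/2:ℝ) 1,
        mnorm M (η t) (η' t) ≤ (2 * σt' (2*t - 1)) * g (σt (2*t - 1)) := by
      intro t ht
      have hz : σt' (2*t) = 0 := σt'_of_one_le (by linarith [ht.1])
      have hz2 : σt (2*t) = 1 := Real.smoothTransition.one_of_one_le (by linarith [ht.1])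
      have he : η' t = (2 * σt' (2*t - 1)) •
          ((J (γ (σt (2*t - 1)))).mulVec (γ' (σt (2*t - 1)))) := by
        simp [hη', hz]
      have he2 : η t = Φ (γ (σt (2*t - 1))) := by
        simp [hη, hz2]
      rw [he, he2, mnorm_smul, abs_of_nonneg (mul_nonneg (by norm_num) (σt'_nonneg _))]
      exact mul_le_mul_of_nonneg_left
        (contr_mnorm hβ hcontr _ _) (mul_nonneg (by norm_num) (σt'_nonneg _))
    calc (∫ t in (1/2:ℝ)..1, mnorm M (η t) (η' t))
        ≤ ∫ t in (1/2:ℝ)..1, (2 * σt' (2*t - 1)) * g (σt (2*t - 1)) := by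
          apply intervalIntegral.integral_mono_on (by norm_num)
            (hIc.intervalIntegrable _ _)
            (((continuous_const.mul hσ1'c).mul (hgc.comp hσ1c)).intervalIntegrable _ _) hb
      _ = ∫ s in σt (2*(1/2:ℝ) - 1)..σt (2*1 - 1), g s := by
          have := intervalIntegral.integral_comp_smul_deriv
            (f := fun t : ℝ => σt (2*t - 1)) (f' := fun t : ℝ => 2 * σt' (2*t - 1))
            (g := g) (a := (1/2:ℝ)) (b := 1)
            (fun t _ => hd1 t) ((continuous_const.mul hσ1'c).continuousOn) hgc
          simpa [Function.comp, smul_eq_mul] using this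
      _ = Real.sqrt (1 - β) * mlen M γ γ' := by
          have e1 : σt (2*(1/2:ℝ) - 1) = 0 := Real.smoothTransition.zero_of_nonpos (by norm_num)
          have e2 : σt (2*(1:ℝ) - 1) = 1 := Real.smoothTransition.one_of_one_le (by norm_num)
          rw [e1, e2]
          simp only [hg, mlen]
          rw [intervalIntegral.integral_const_mul]
  have hmem : mlen M η η' ∈ pathSet M (Φ a + w) (Φ b) :=
    ⟨η, η', hdη, hη'c, hη0, hη1, rfl⟩
  calc pdist M (Φ a + w) (Φ b) ≤ mlen M η η' := csInf_le (pathSet_bddBelow _ _) hmem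
    _ = _ + _ := hsplit
    _ ≤ Real.sqrt α₂ * euclNorm w + Real.sqrt (1 - β) * mlen M γ γ' :=
        add_le_add hfirst hsecond
    _ = Real.sqrt (1 - β) * mlen M γ γ' + Real.sqrt α₂ * euclNorm w := add_comm _ _

lemma euclNorm_neg (v : Fin n → ℝ) : euclNorm (-v) = euclNorm v := by
  simpa using euclNorm_smul (-1) v

lemma pdist_step (hβ0 : 0 < β) (hβ1 : β ≤ 1) (hα₂ : 0 ≤ α₂)
    (hΦ : ContDiff ℝ 1 Φ)
    (hJ : ∀ x, HasFDerivAt Φ (J x).mulVecLin.toContinuousLinearMap x)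
    (hM : Continuous M)
    (hMub : ∀ x (v : Fin n → ℝ), v ⬝ᵥ (M x).mulVec v ≤ α₂ * (euclNorm v) ^ 2)
    (hcontr : ∀ x, ((1 - β) • M x - (J x)ᵀ * M (Φ x) * J x).PosSemidef)
    (a b w : Fin n → ℝ) :
    pdist M (Φ a + w) (Φ b)
      ≤ Real.sqrt (1 - β) * pdist M a b + Real.sqrt α₂ * euclNorm w := by
  refine le_of_forall_pos_le_add fun ε hε => ?_
  obtain ⟨L, hL, hLe⟩ : ∃ L ∈ pathSet M a b, L < pdist M a b + ε :=
    exists_lt_of_csInf_lt (pathSet_nonempty a b) (lt_add_of_pos_right _ hε)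
  have h := pdist_step_path hβ0 hβ1 hα₂ hΦ hJ hM hMub hcontr a b w hL
  have hs0 : (0:ℝ) ≤ Real.sqrt (1 - β) := Real.sqrt_nonneg _
  have hs1 : Real.sqrt (1 - β) ≤ 1 := Real.sqrt_le_one.2 (by linarith)
  have h2 : Real.sqrt (1 - β) * L ≤ Real.sqrt (1 - β) * (pdist M a b + ε) :=
    mul_le_mul_of_nonneg_left hLe.le hs0
  nlinarith [euclNorm_nonneg w, Real.sqrt_nonneg α₂]

lemma iss {a e : ℕ → ℝ} {c : ℝ} (hc0 : 0 ≤ c) (hc1 : c < 1) (ha : ∀ k, 0 ≤ a k)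
    (hrec : ∀ k, a (k + 1) ≤ c * a k + e k)
    (he : Filter.Tendsto e Filter.atTop (nhds 0)) :
    Filter.Tendsto a Filter.atTop (nhds 0) := by
  rw [Metric.tendsto_atTop]
  intro ε hε
  have h1c : (0:ℝ) < 1 - c := by linarith
  set δ := ε * (1 - c) / 4 with hδ
  have hδ0 : 0 < δ := by positivity
  obtain ⟨N, hN⟩ := (Metric.tendsto_atTop.1 he) δ hδ0
  have key : ∀ m, a (N + m) ≤ c ^ m * a N + δ / (1 - c) := by
    intro m
    induction m with
    | zero => simp [le_add_of_nonneg_right (div_nonneg hδ0.le h1c.le)]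
    | succ m ih =>
      have h1 := hrec (N + m)
      have h2 : e (N + m) < δ := by
        have := hN (N + m) (Nat.le_add_right N m)
        rw [Real.dist_eq, sub_zero] at this
        exact lt_of_le_of_lt (le_abs_self _) this
      have h3 : c * a (N + m) ≤ c * (c ^ m * a N + δ / (1 - c)) :=
        mul_le_mul_of_nonneg_left ih hc0
      have h4 : a (N + (m + 1)) = a ((N + m) + 1) := by ring_nf
      rw [h4]
      have h5 : c * (c ^ m * a N + δ / (1 - c)) + δ
          = c ^ (m + 1) * a N + δ / (1 - c) := by
        field_simp
        ring
      calc a ((N + m) + 1) ≤ c * a (N + m) + e (N + m) := h1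
        _ ≤ c * (c ^ m * a N + δ / (1 - c)) + δ := by linarith
        _ = c ^ (m + 1) * a N + δ / (1 - c) := h5
  have hgeo : Filter.Tendsto (fun m => c ^ m * a N) Filter.atTop (nhds 0) := by
    simpa using (tendsto_pow_atTop_nhds_zero_of_lt_one hc0 hc1).mul_const (a N)
  obtain ⟨K, hK⟩ := (Metric.tendsto_atTop.1 hgeo) (ε / 2) (by positivity)
  refine ⟨N + K, fun k hk => ?_⟩
  obtain ⟨m, rfl, hm⟩ : ∃ m, k = N + m ∧ K ≤ m := ⟨k - N, by omega, by omega⟩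
  have h1 := key m
  have h2 := hK m hm
  rw [Real.dist_eq, sub_zero] at h2
  rw [Real.dist_eq, sub_zero, abs_of_nonneg (ha _)]
  have h3 : c ^ m * a N < ε / 2 := lt_of_le_of_lt (le_abs_self _) h2
  have h4 : δ / (1 - c) ≤ ε / 2 := by
    rw [hδ, div_le_iff₀ h1c]
    nlinarith
  linarith

end OffsetFreeAux

open OffsetFreeAux in
/-- offset-free tracking, Proposition 5: for a contracting C¹ map `Φ`
(with Jacobian `J(x) = DΦ(x)`, continuous uniformly bounded symmetric metric `M` and
contraction condition `DΦ(x)ᵀ M(Φ(x)) DΦ(x) ⪯ (1-β) M(x)`, `P ⪯ Q` meaning `Q - P`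
positive semidefinite), if the perturbation in `x_{k+1} = Φ(x_k) + w_k` vanishes,
`‖w_k‖ → 0`, then the perturbed trajectory converges to the unperturbed one
`y_{k+1} = Φ(y_k)`: `‖x_k - y_k‖ → 0`. -/
theorem vanishing_perturbation_offset_free_tracking
    (n : ℕ) (hn : 1 ≤ n) (β α₁ α₂ : ℝ)
    (hβ0 : 0 < β) (hβ1 : β ≤ 1) (hα₁ : 0 < α₁) (hα₁₂ : α₁ ≤ α₂)
    (Φ : (Fin n → ℝ) → Fin n → ℝ) (hΦ : ContDiff ℝ 1 Φ)
    (J : (Fin n → ℝ) → Matrix (Fin n) (Fin n) ℝ)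
    (hJ : ∀ x, HasFDerivAt Φ (J x).mulVecLin.toContinuousLinearMap x)
    (M : (Fin n → ℝ) → Matrix (Fin n) (Fin n) ℝ)
    (hMcont : Continuous M) (hMsym : ∀ x, (M x).IsHermitian)
    (hMlb : ∀ x (v : Fin n → ℝ), α₁ * (euclNorm v) ^ 2 ≤ v ⬝ᵥ (M x).mulVec v)
    (hMub : ∀ x (v : Fin n → ℝ), v ⬝ᵥ (M x).mulVec v ≤ α₂ * (euclNorm v) ^ 2)
    (hcontr : ∀ x, ((1 - β) • M x - (J x)ᵀ * M (Φ x) * J x).PosSemidef)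
    (x y : ℕ → Fin n → ℝ) (w : ℕ → Fin n → ℝ)
    (hx : ∀ k, x (k + 1) = Φ (x k) + w k)
    (hy : ∀ k, y (k + 1) = Φ (y k))
    (hw : Filter.Tendsto (fun k => euclNorm (w k)) Filter.atTop (nhds 0)) :
    Filter.Tendsto (fun k => euclNorm (x k - y k)) Filter.atTop (nhds 0) := by
  have hα₂0 : (0:ℝ) ≤ α₂ := le_trans hα₁.le hα₁₂
  set d : ℕ → ℝ := fun k => pdist M (x k) (y k) with hdd
  have hlow : ∀ k, Real.sqrt α₁ * euclNorm (x k - y k) ≤ d k := by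
    intro k
    have := pdist_ge hα₁.le hMcont hMlb (x k) (y k)
    rwa [show y k - x k = -(x k - y k) by ring, euclNorm_neg] at this
  have hd0 : ∀ k, 0 ≤ d k := fun k =>
    le_trans (mul_nonneg (Real.sqrt_nonneg _) (euclNorm_nonneg _)) (hlow k)
  have hrec : ∀ k, d (k + 1) ≤ Real.sqrt (1 - β) * d k
      + Real.sqrt α₂ * euclNorm (w k) := by
    intro k
    have h := pdist_step hβ0 hβ1 hα₂0 hΦ hJ hMcont hMub hcontr (x k) (y k) (w k)
    simpa [hdd, hx k, hy k] using h
  have hc0 : (0:ℝ) ≤ Real.sqrt (1 - β) := Real.sqrt_nonneg _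
  have hc1 : Real.sqrt (1 - β) < 1 := by
    have h2 : Real.sqrt (1 - β) < Real.sqrt 1 := Real.sqrt_lt_sqrt (by linarith) (by linarith)
    rwa [Real.sqrt_one] at h2
  have he : Filter.Tendsto (fun k => Real.sqrt α₂ * euclNorm (w k))
      Filter.atTop (nhds 0) := by
    simpa using hw.const_mul (Real.sqrt α₂)
  have hdt : Filter.Tendsto d Filter.atTop (nhds 0) := iss hc0 hc1 hd0 hrec he
  have hsq : (0:ℝ) < Real.sqrt α₁ := Real.sqrt_pos.2 hα₁
  refine squeeze_zero (fun k => euclNorm_nonneg _) (fun k => ?_) (by simpa using hdt.div_const (Real.sqrt α₁))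
  rw [le_div_iff₀ hsq]
  rw [mul_comm]
  exact hlow k
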